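/- arXiv:2403.04089 — 6 statements merged into one kernel-verified Lean document; each statement's English description precedes it below -/
import Mathlib

section
/- Let L > 0 and let a : ℝ → ℝ be continuously differentiable on [0,L] with a(0) = a(L) = 0 and a(s) > 0 for all s ∈ (0,L). Then the function φ : (0,L) → ℝ defined by φ(s) = exp(∫_{L/2}^s 1/a(u) du) is a strictly increasing continuous bijection from the open interval (0,L) onto (0,∞). -/
/-!
Since `a` is `C¹` on `[0, L]` and vanishes at both ends, there is `M` with `a u ≤ M u` and
`a u ≤ M (L - u)`. Comparing `1 / a` with `1 / (M u)`, whose integral diverges logarithmically,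
shows that `ψ s = ∫_{L/2}^s 1/a` tends to `-∞` as `s → 0⁺` and to `+∞` as `s → L⁻`. As `1 / a` is
continuous and positive on `(0, L)`, `ψ` is a continuous increasing bijection `(0, L) → ℝ`, and
`φ = exp ∘ ψ`.
-/

open Set Filter Topology MeasureTheory intervalIntegral

theorem ContDiffOn.exists_abs_sub_le_mul_of_Icc {a : ℝ → ℝ} {α β : ℝ} (hαβ : α < β)
    (ha : ContDiffOn ℝ 1 a (Icc α β)) :
    ∃ M, ∀ x ∈ Icc α β, ∀ y ∈ Icc α β, |a y - a x| ≤ M * |y - x| := by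
  obtain ⟨M, hM⟩ := isCompact_Icc.exists_bound_of_continuousOn
    (ha.continuousOn_derivWithin (uniqueDiffOn_Icc hαβ) le_rfl)
  exact ⟨M, fun x hx y hy => (convex_Icc α β).norm_image_sub_le_of_norm_derivWithin_le
    (ha.differentiableOn one_ne_zero) hM hx hy⟩

section Primitive

variable {f : ℝ → ℝ} {α β c : ℝ}

theorem ContinuousOn.intervalIntegrable_of_mem_Ioo (hf : ContinuousOn f (Ioo α β)) {s t : ℝ}
    (hs : s ∈ Ioo α β) (ht : t ∈ Ioo α β) : IntervalIntegrable f volume s t :=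
  (hf.mono (ordConnected_Ioo.uIcc_subset hs ht)).intervalIntegrable

theorem strictMonoOn_integral_of_pos (hf : ContinuousOn f (Ioo α β))
    (hpos : ∀ x ∈ Ioo α β, 0 < f x) (hc : c ∈ Ioo α β) :
    StrictMonoOn (fun s => ∫ x in c..s, f x) (Ioo α β) := by
  intro s hs t ht hst
  have hdiff : (∫ x in c..t, f x) - ∫ x in c..s, f x = ∫ x in s..t, f x :=
    integral_interval_sub_left (hf.intervalIntegrable_of_mem_Ioo hc ht)
      (hf.intervalIntegrable_of_mem_Ioo hc hs)
  have hpos_st : 0 < ∫ x in s..t, f x :=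
    intervalIntegral_pos_of_pos_on (hf.intervalIntegrable_of_mem_Ioo hs ht)
      (fun x hx => hpos x ⟨hs.1.trans hx.1, hx.2.trans ht.2⟩) hst
  exact sub_pos.1 (hdiff ▸ hpos_st)

theorem continuousOn_integral_of_continuousOn_Ioo (hf : ContinuousOn f (Ioo α β))
    (hc : c ∈ Ioo α β) : ContinuousOn (fun s => ∫ x in c..s, f x) (Ioo α β) := fun x hx =>
  (integral_hasDerivAt_right (hf.intervalIntegrable_of_mem_Ioo hc hx)
    (hf.stronglyMeasurableAtFilter isOpen_Ioo x hx)
    (hf.continuousAt (isOpen_Ioo.mem_nhds hx))).continuousAt.continuousWithinAt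

end Primitive

theorem ContDiffOn.exists_le_mul_of_eq_zero_of_eq_zero {a : ℝ → ℝ} {L : ℝ} (hL : 0 < L)
    (ha : ContDiffOn ℝ 1 a (Icc 0 L)) (ha0 : a 0 = 0) (haL : a L = 0) :
    ∃ M, ∀ u ∈ Icc 0 L, a u ≤ M * u ∧ a u ≤ M * (L - u) := by
  obtain ⟨M, hM⟩ := ha.exists_abs_sub_le_mul_of_Icc hL
  refine ⟨M, fun u hu => ⟨?_, ?_⟩⟩
  · simpa [ha0, abs_of_nonneg hu.1] using (le_abs_self _).trans (hM 0 ⟨le_rfl, hL.le⟩ u hu)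
  · simpa [haL, abs_of_nonpos (sub_nonpos.2 hu.2)] using
      (le_abs_self _).trans (hM L ⟨hL.le, le_rfl⟩ u hu)

theorem tendsto_integral_one_div_atTop_of_le_mul {a : ℝ → ℝ} {b M : ℝ} (hb : 0 < b)
    (hcont : ContinuousOn a (Ioc 0 b)) (hpos : ∀ u ∈ Ioc 0 b, 0 < a u)
    (hle : ∀ u ∈ Ioc 0 b, a u ≤ M * u) :
    Tendsto (fun s => ∫ u in s..b, 1 / a u) (𝓝[>] 0) atTop := by
  have hM : 0 < M := by
    nlinarith [hpos b ⟨hb, le_rfl⟩, hle b ⟨hb, le_rfl⟩]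
  have hlog : Tendsto (fun s => M⁻¹ * Real.log (b / s)) (𝓝[>] 0) atTop :=
    (Real.tendsto_log_atTop.comp (tendsto_inv_nhdsGT_zero.const_mul_atTop hb)).const_mul_atTop
      (inv_pos.2 hM)
  refine tendsto_atTop_mono' _ ?_ hlog
  filter_upwards [Ioc_mem_nhdsGT hb] with s hs
  have hsub : uIcc s b ⊆ Ioc 0 b := by
    rw [uIcc_of_le hs.2]
    exact Icc_subset_Ioc hs.1 le_rfl
  calc M⁻¹ * Real.log (b / s) = ∫ u in s..b, M⁻¹ * u⁻¹ := by
        rw [intervalIntegral.integral_const_mul, integral_inv_of_pos hs.1 hb]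
    _ ≤ ∫ u in s..b, 1 / a u := by
        refine integral_mono_on hs.2
          ((intervalIntegrable_inv_iff.2 (Or.inr fun h => (hsub h).1.ne rfl)).const_mul _)
          (ContinuousOn.intervalIntegrable (continuousOn_const.div (hcont.mono hsub)
            fun u hu => (hpos u (hsub hu)).ne')) fun u hu => ?_
        have hu' : u ∈ Ioc 0 b := hsub (by rwa [uIcc_of_le hs.2])
        rw [← mul_inv, ← one_div]
        exact one_div_le_one_div_of_le (hpos u hu') (hle u hu')
theorem tendsto_integral_one_div_atTop_of_le_mul_sub {a : ℝ → ℝ} {c L M : ℝ} (hc : c < L)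
    (hcont : ContinuousOn a (Ico c L)) (hpos : ∀ u ∈ Ico c L, 0 < a u)
    (hle : ∀ u ∈ Ico c L, a u ≤ M * (L - u)) :
    Tendsto (fun t => ∫ u in c..t, 1 / a u) (𝓝[<] L) atTop := by
  have hrefl : ∀ u ∈ Ioc 0 (L - c), L - u ∈ Ico c L := fun u hu =>
    ⟨by linarith [hu.2], by linarith [hu.1]⟩
  have hreflected := tendsto_integral_one_div_atTop_of_le_mul (a := fun u => a (L - u))
    (sub_pos.2 hc) (hcont.comp (continuousOn_const.sub continuousOn_id) hrefl)
    (fun u hu => hpos _ (hrefl u hu)) (fun u hu => by simpa using hle _ (hrefl u hu))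
  have hsub : Tendsto (fun t => L - t) (𝓝[<] L) (𝓝[>] 0) := by
    refine tendsto_nhdsWithin_iff.2
      ⟨?_, eventually_nhdsWithin_of_forall fun t ht => mem_Ioi.2 (sub_pos.2 ht)⟩
    simpa using ((continuous_sub_left L).tendsto L).mono_left nhdsWithin_le_nhds
  refine (hreflected.comp hsub).congr fun t => ?_
  simp only [Function.comp_apply, integral_comp_sub_left (fun u => 1 / a u)]
  congr 1 <;> ring

theorem ContinuousOn.bijOn_Ioo_univ_of_tendsto {f : ℝ → ℝ} {α β : ℝ} (hαβ : α < β)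
    (hcont : ContinuousOn f (Ioo α β)) (hmono : StrictMonoOn f (Ioo α β))
    (hbot : Tendsto f (𝓝[>] α) atBot) (htop : Tendsto f (𝓝[<] β) atTop) :
    BijOn f (Ioo α β) univ :=
  ⟨mapsTo_univ _ _, hmono.injOn, hcont.surjOn_of_tendsto (nonempty_Ioo.2 hαβ)
    (by rwa [tendsto_comp_coe_Ioo_atBot hαβ]) (by rwa [tendsto_comp_coe_Ioo_atTop hαβ])⟩

theorem Real.bijOn_exp_univ_Ioi : BijOn Real.exp univ (Ioi 0) :=
  ⟨fun x _ => Real.exp_pos x, Real.exp_injective.injOn,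
    fun y hy => ⟨Real.log y, trivial, Real.exp_log hy⟩⟩

/-- Lemma 2.26: the map `φ(s) = exp(∫_{L/2}^s 1/a(u) du)` is a strictly increasing
continuous bijection from `(0, L)` onto `(0, ∞)`. -/
theorem stmt_0 (L : ℝ) (hL : 0 < L) (a : ℝ → ℝ)
    (ha : ContDiffOn ℝ 1 a (Set.Icc 0 L))
    (ha0 : a 0 = 0) (haL : a L = 0)
    (hapos : ∀ s ∈ Set.Ioo 0 L, 0 < a s)
    (φ : ℝ → ℝ)
    (hφ : ∀ s, φ s = Real.exp (∫ u in (L/2)..s, 1 / a u)) :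
    StrictMonoOn φ (Set.Ioo 0 L) ∧ ContinuousOn φ (Set.Ioo 0 L) ∧
      Set.BijOn φ (Set.Ioo 0 L) (Set.Ioi 0) := by
  set ψ : ℝ → ℝ := fun s => ∫ u in (L/2)..s, 1 / a u
  have hφψ : φ = Real.exp ∘ ψ := funext hφ
  have hmid : L / 2 ∈ Ioo 0 L := ⟨by linarith, by linarith⟩
  have hcont : ContinuousOn (fun u => 1 / a u) (Ioo 0 L) :=
    continuousOn_const.div (ha.continuousOn.mono Ioo_subset_Icc_self) fun u hu => (hapos u hu).ne'
  have hψmono : StrictMonoOn ψ (Ioo 0 L) :=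
    strictMonoOn_integral_of_pos hcont (fun u hu => one_div_pos.2 (hapos u hu)) hmid
  have hψcont : ContinuousOn ψ (Ioo 0 L) := continuousOn_integral_of_continuousOn_Ioo hcont hmid
  obtain ⟨M, hM⟩ := ha.exists_le_mul_of_eq_zero_of_eq_zero hL ha0 haL
  have hleft : Ioc 0 (L / 2) ⊆ Ioo 0 L := Ioc_subset_Ioo_right hmid.2
  have hright : Ico (L / 2) L ⊆ Ioo 0 L := Ico_subset_Ioo_left hmid.1
  have hψbot : Tendsto ψ (𝓝[>] 0) atBot := by
    refine (tendsto_neg_atTop_atBot.comp (tendsto_integral_one_div_atTop_of_le_mul hmid.1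
      (ha.continuousOn.mono (hleft.trans Ioo_subset_Icc_self)) (fun u hu => hapos u (hleft hu))
      fun u hu => (hM u (Ioo_subset_Icc_self (hleft hu))).1)).congr fun s => ?_
    exact (integral_symm _ _).symm
  have hψtop : Tendsto ψ (𝓝[<] L) atTop :=
    tendsto_integral_one_div_atTop_of_le_mul_sub hmid.2
      (ha.continuousOn.mono (hright.trans Ioo_subset_Icc_self)) (fun u hu => hapos u (hright hu))
      fun u hu => (hM u (Ioo_subset_Icc_self (hright hu))).2
  rw [hφψ]
  exact ⟨Real.exp_strictMono.comp_strictMonoOn hψmono,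
    Real.continuous_exp.comp_continuousOn hψcont,
    Real.bijOn_exp_univ_Ioi.comp (hψcont.bijOn_Ioo_univ_of_tendsto hL hψmono hψbot hψtop)⟩
end

section
/- Let L > 0 and let a : ℝ → ℝ be continuous and strictly positive on (0,L). Define τ : (0,L) → ℝ by τ(s) = arctan(φ(s)), where φ(s) = exp(∫_{L/2}^s 1/a(u) du). Then τ satisfies a(s)·τ'(s) = (1/2)·sin(2τ(s)) for all s ∈ (0,L) and τ(L/2) = π/4. If in addition a is continuously differentiable on [0,L] with a(0) = a(L) = 0, then τ is a strictly increasing continuous bijection from (0,L) onto (0,π/2). -/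
/-!
Put `F s = ∫ u in L/2..s, 1 / a u`, so that `τ = arctan ∘ exp ∘ F` and `F' = 1 / a`. Since
`(arctan ∘ exp)' = exp / (1 + exp ^ 2) = sin (2 * arctan ∘ exp) / 2`, the equation
`a τ' = sin (2 τ) / 2` follows, and `F (L/2) = 0` gives `τ (L/2) = arctan 1 = π / 4`.

If `a` is `C¹` on `[0, L]` and vanishes at both ends, it is Lipschitz, so `a s ≤ C s` and
`a s ≤ C (L - s)`. Comparing derivatives, `F - C⁻¹ log s` and `F + C⁻¹ log (L - s)` are monotone,
so `F` tends to `-∞` at `0` and to `+∞` at `L`. Being continuous and strictly increasing, `F` is a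
bijection of `(0, L)` onto `ℝ`, and `arctan ∘ exp` is one of `ℝ` onto `(0, π / 2)`.
-/

open Real Set Filter Topology

theorem Real.sin_two_mul_arctan (x : ℝ) : sin (2 * arctan x) = 2 * x / (1 + x ^ 2) := by
  have h : 0 < 1 + x ^ 2 := by positivity
  rw [sin_two_mul, sin_arctan, cos_arctan]
  field_simp
  rw [sq_sqrt h.le]

theorem HasDerivAt.arctan_exp {f : ℝ → ℝ} {f' x : ℝ} (hf : HasDerivAt f f' x) :
    HasDerivAt (fun x => Real.arctan (Real.exp (f x)))
      (Real.sin (2 * Real.arctan (Real.exp (f x))) / 2 * f') x := by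
  convert hf.exp.arctan using 1
  rw [sin_two_mul_arctan]
  ring

theorem Real.bijOn_arctan_exp : BijOn (fun x => arctan (exp x)) univ (Ioo 0 (π / 2)) := by
  refine ⟨fun x _ => ⟨?_, arctan_lt_pi_div_two _⟩,
    (arctan_strictMono.comp exp_strictMono).injective.injOn, fun y hy => ?_⟩
  · simpa only [arctan_zero] using arctan_strictMono (exp_pos x)
  · refine ⟨log (tan y), mem_univ _, ?_⟩
    dsimp only
    rw [exp_log (tan_pos_of_pos_of_lt_pi_div_two hy.1 hy.2),
      arctan_tan (by linarith [hy.1, pi_pos]) hy.2]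

theorem monotoneOn_Ioo_of_hasDerivAt_nonneg {f f' : ℝ → ℝ} {p q : ℝ}
    (hf : ∀ x ∈ Ioo p q, HasDerivAt f (f' x) x) (hf' : ∀ x ∈ Ioo p q, 0 ≤ f' x) :
    MonotoneOn f (Ioo p q) :=
  monotoneOn_of_hasDerivWithinAt_nonneg (convex_Ioo p q)
    (fun x hx => (hf x hx).continuousAt.continuousWithinAt)
    (by simpa only [interior_Ioo] using fun x hx => (hf x hx).hasDerivWithinAt)
    (by simpa only [interior_Ioo] using hf')

theorem strictMonoOn_Ioo_of_hasDerivAt_pos {f f' : ℝ → ℝ} {p q : ℝ}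
    (hf : ∀ x ∈ Ioo p q, HasDerivAt f (f' x) x) (hf' : ∀ x ∈ Ioo p q, 0 < f' x) :
    StrictMonoOn f (Ioo p q) :=
  strictMonoOn_of_hasDerivWithinAt_pos (convex_Ioo p q)
    (fun x hx => (hf x hx).continuousAt.continuousWithinAt)
    (by simpa only [interior_Ioo] using fun x hx => (hf x hx).hasDerivWithinAt)
    (by simpa only [interior_Ioo] using hf')

theorem ContinuousOn.hasDerivAt_intervalIntegral {f : ℝ → ℝ} {p q c s : ℝ}
    (hf : ContinuousOn f (Ioo p q)) (hc : c ∈ Ioo p q) (hs : s ∈ Ioo p q) :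
    HasDerivAt (fun t => ∫ u in c..t, f u) (f s) s :=
  intervalIntegral.integral_hasDerivAt_right
    (hf.mono (ordConnected_Ioo.uIcc_subset hc hs)).intervalIntegrable
    (hf.stronglyMeasurableAtFilter isOpen_Ioo s hs) (hf.continuousAt (isOpen_Ioo.mem_nhds hs))

theorem ContDiffOn.exists_le_mul_sub_of_eq_zero {a : ℝ → ℝ} {p q : ℝ}
    (ha : ContDiffOn ℝ 1 a (Icc p q)) (hp : a p = 0) (hq : a q = 0) :
    ∃ C > 0, ∀ s ∈ Icc p q, a s ≤ C * (s - p) ∧ a s ≤ C * (q - s) := by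
  obtain ⟨K, hK⟩ := ha.exists_lipschitzOnWith one_ne_zero (convex_Icc p q) isCompact_Icc
  refine ⟨K + 1, by positivity, fun s hs => ?_⟩
  have hps : p ∈ Icc p q := ⟨le_rfl, hs.1.trans hs.2⟩
  have hqs : q ∈ Icc p q := ⟨hs.1.trans hs.2, le_rfl⟩
  have hlp := hK.dist_le_mul s hs p hps
  have hlq := hK.dist_le_mul q hqs s hs
  rw [Real.dist_eq, Real.dist_eq, hp, sub_zero, abs_of_nonneg (sub_nonneg.2 hs.1)] at hlp
  rw [Real.dist_eq, Real.dist_eq, hq, zero_sub, abs_neg, abs_of_nonneg (sub_nonneg.2 hs.2)] at hlq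
  constructor <;> nlinarith [le_abs_self (a s), hs.1, hs.2]

section Divergence

variable {F a : ℝ → ℝ} {p q C : ℝ}

theorem tendsto_nhdsGT_atBot_of_hasDerivAt_one_div (hpq : p < q) (hC : 0 < C)
    (hF : ∀ s ∈ Ioo p q, HasDerivAt F (1 / a s) s) (hpos : ∀ s ∈ Ioo p q, 0 < a s)
    (hle : ∀ s ∈ Ioo p q, a s ≤ C * (s - p)) :
    Tendsto F (𝓝[>] p) atBot := by
  set G : ℝ → ℝ := fun s => F s - C⁻¹ * log (s - p)
  have hG : MonotoneOn G (Ioo p q) := by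
    refine monotoneOn_Ioo_of_hasDerivAt_nonneg
      (fun s hs => (hF s hs).sub ((((hasDerivAt_id s).sub_const p).log
        (sub_pos.2 hs.1).ne').const_mul C⁻¹)) fun s hs => ?_
    have : 1 / (C * (s - p)) ≤ 1 / a s := one_div_le_one_div_of_le (hpos s hs) (hle s hs)
    simp only [id, one_div, mul_inv] at this ⊢
    linarith
  obtain ⟨m, hm⟩ := nonempty_Ioo.2 hpq
  have hbound : ∀ s ∈ Ioo p m, F s ≤ C⁻¹ * log (s - p) + G m := fun s hs => by
    have := hG ⟨hs.1, hs.2.trans hm.2⟩ hm hs.2.le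
    simp only [G] at this ⊢
    linarith
  have hsub : Tendsto (fun s => s - p) (𝓝[>] p) (𝓝[>] 0) := by
    have := (map_subRight_nhdsGT (c := p) (a := p)).le
    rwa [sub_self] at this
  refine tendsto_atBot_mono' _ ?_ (tendsto_atBot_add_const_right _ (G m)
    ((tendsto_log_nhdsGT_zero.comp hsub).const_mul_atBot (inv_pos.2 hC)))
  filter_upwards [Ioo_mem_nhdsGT hm.1] using hbound

theorem tendsto_nhdsLT_atTop_of_hasDerivAt_one_div (hpq : p < q) (hC : 0 < C)
    (hF : ∀ s ∈ Ioo p q, HasDerivAt F (1 / a s) s) (hpos : ∀ s ∈ Ioo p q, 0 < a s)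
    (hle : ∀ s ∈ Ioo p q, a s ≤ C * (q - s)) :
    Tendsto F (𝓝[<] q) atTop := by
  set G : ℝ → ℝ := fun s => F s + C⁻¹ * log (q - s)
  have hG : MonotoneOn G (Ioo p q) := by
    refine monotoneOn_Ioo_of_hasDerivAt_nonneg
      (fun s hs => (hF s hs).add ((((hasDerivAt_id s).const_sub q).log
        (sub_pos.2 hs.2).ne').const_mul C⁻¹)) fun s hs => ?_
    have : 1 / (C * (q - s)) ≤ 1 / a s := one_div_le_one_div_of_le (hpos s hs) (hle s hs)
    simp only [id, one_div, mul_inv, neg_div, mul_neg] at this ⊢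
    linarith
  obtain ⟨m, hm⟩ := nonempty_Ioo.2 hpq
  have hbound : ∀ s ∈ Ioo m q, -(C⁻¹ * log (q - s)) + G m ≤ F s := fun s hs => by
    have := hG hm ⟨hm.1.trans hs.1, hs.2⟩ hs.1.le
    simp only [G] at this ⊢
    linarith
  have hsub : Tendsto (fun s => q - s) (𝓝[<] q) (𝓝[>] 0) := by
    have := (map_subLeft_nhdsLT (c := q) (a := q)).le
    rwa [sub_self] at this
  refine tendsto_atTop_mono' _ ?_ (tendsto_atTop_add_const_right _ (G m)
    (tendsto_neg_atBot_atTop.comp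
      ((tendsto_log_nhdsGT_zero.comp hsub).const_mul_atBot (inv_pos.2 hC))))
  filter_upwards [Ioo_mem_nhdsLT hm.2] using hbound

end Divergence

/-- From the proof of Lemma 2.28: `τ(s) = arctan(φ(s))` solves
`a(s) τ'(s) = (1/2) sin(2 τ(s))` with `τ(L/2) = π/4`; and if moreover `a` is `C¹` on
`[0, L]` with `a(0) = a(L) = 0`, then `τ` is a strictly increasing continuous bijection
from `(0, L)` onto `(0, π/2)`. -/
theorem stmt_3 (L : ℝ) (hL : 0 < L) (a : ℝ → ℝ)
    (ha : ContinuousOn a (Set.Ioo 0 L))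
    (hapos : ∀ s ∈ Set.Ioo 0 L, 0 < a s)
    (φ τ : ℝ → ℝ)
    (hφ : ∀ s, φ s = Real.exp (∫ u in (L/2)..s, 1 / a u))
    (hτ : ∀ s, τ s = Real.arctan (φ s)) :
    ((∀ s ∈ Set.Ioo 0 L, DifferentiableAt ℝ τ s ∧
          a s * deriv τ s = (1/2) * Real.sin (2 * τ s)) ∧
        τ (L/2) = Real.pi / 4) ∧
      (ContDiffOn ℝ 1 a (Set.Icc 0 L) → a 0 = 0 → a L = 0 →
        StrictMonoOn τ (Set.Ioo 0 L) ∧ ContinuousOn τ (Set.Ioo 0 L) ∧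
          Set.BijOn τ (Set.Ioo 0 L) (Set.Ioo 0 (Real.pi / 2))) := by
  set F : ℝ → ℝ := fun s => ∫ u in (L/2)..s, 1 / a u
  obtain rfl : τ = fun s => arctan (exp (F s)) := funext fun s => by rw [hτ, hφ]
  have hF : ∀ s ∈ Ioo 0 L, HasDerivAt F (1 / a s) s := fun s hs =>
    (continuousOn_const.div ha fun u hu => (hapos u hu).ne').hasDerivAt_intervalIntegral
      ⟨by linarith, by linarith⟩ hs
  have hFcont : ContinuousOn F (Ioo 0 L) := fun s hs =>
    (hF s hs).continuousAt.continuousWithinAt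
  refine ⟨⟨fun s hs => ?_, by simp [F, arctan_one]⟩, fun hC1 ha0 haL => ?_⟩
  · have hτ' := (hF s hs).arctan_exp
    refine ⟨hτ'.differentiableAt, ?_⟩
    rw [hτ'.deriv]
    field_simp [(hapos s hs).ne']
  obtain ⟨C, hC, hCle⟩ := hC1.exists_le_mul_sub_of_eq_zero ha0 haL
  have hFmono : StrictMonoOn F (Ioo 0 L) :=
    strictMonoOn_Ioo_of_hasDerivAt_pos hF fun s hs => one_div_pos.2 (hapos s hs)
  have hFsurj : SurjOn F (Ioo 0 L) univ := hFcont.surjOn_of_tendsto (nonempty_Ioo.2 hL)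
    ((tendsto_comp_coe_Ioo_atBot hL).2 <| tendsto_nhdsGT_atBot_of_hasDerivAt_one_div hL hC hF
      hapos fun s hs => (hCle s (Ioo_subset_Icc_self hs)).1)
    ((tendsto_comp_coe_Ioo_atTop hL).2 <| tendsto_nhdsLT_atTop_of_hasDerivAt_one_div hL hC hF
      hapos fun s hs => (hCle s (Ioo_subset_Icc_self hs)).2)
  exact ⟨(arctan_strictMono.comp exp_strictMono).comp_strictMonoOn hFmono,
    (continuous_arctan.comp continuous_exp).comp_continuousOn hFcont,
    bijOn_arctan_exp.comp ⟨mapsTo_univ _ _, hFmono.injOn, hFsurj⟩⟩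
end

section
/- Let n ≥ 1 be an integer, λ ∈ ℝ, let g be an n×n positive-definite Hermitian complex matrix, and let R : Fin n → Fin n → Fin n → Fin n → ℂ satisfy the Kähler curvature symmetries R(α,β,γ,δ) = R(γ,β,α,δ) = R(α,δ,γ,β) = R(γ,δ,α,β) and conj(R(α,β,γ,δ)) = R(β,α,δ,γ) for all indices. Suppose that for every Hermitian n×n complex matrix u, Re( −Σ_{α,β,γ,δ} R(α,β,γ,δ)·u(α,β)·u(γ,δ) ) ≥ 2λ · Re( Σ_{α,β,γ,δ} (g(α,β)g(γ,δ) + g(α,δ)g(γ,β))·u(α,β)·u(γ,δ) ). Then for all vectors v, w ∈ ℂⁿ, Re( −Σ_{α,β,γ,δ} R(α,β,γ,δ)·v(α)·conj(v(β))·w(γ)·conj(w(δ)) ) ≥ 2λ · Re( Σ_{α,β,γ,δ} (g(α,β)g(γ,δ) + g(α,δ)g(γ,β))·v(α)·conj(v(β))·w(γ)·conj(w(δ)) ). -/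
/-!
Write `x = v w*`, so that `x + xᴴ` and `i (x - xᴴ)` are Hermitian. For any curvature-type tensor
`F` the quadratic forms `Q(u) = ∑ F αβγδ u_αβ u_γδ` of these two matrices add up to
`2 (B(x, xᴴ) + B(xᴴ, x))`, the `B(x, x)` and `B(xᴴ, xᴴ)` terms cancelling because `i² = -1`.
The Kähler symmetries of `F` identify both cross terms with the bisectional expression
`∑ F αβγδ v_α v̄_β w_γ w̄_δ`; applying this to `R` and to `g_αβ g_γδ + g_αδ g_γβ` and adding the two instances
of the hypothesis gives the claim.
-/

open scoped ComplexOrder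
open Complex Matrix

section FourfoldSum

variable {ι M : Type*} [Fintype ι] [AddCommMonoid M]

theorem sum_sum_sum_sum_comm_fst_thd (f : ι → ι → ι → ι → M) :
    ∑ α, ∑ β, ∑ γ, ∑ δ, f α β γ δ = ∑ α, ∑ β, ∑ γ, ∑ δ, f γ β α δ :=
  calc ∑ α, ∑ β, ∑ γ, ∑ δ, f α β γ δ
      = ∑ α, ∑ γ, ∑ β, ∑ δ, f α β γ δ := Finset.sum_congr rfl fun _ _ => Finset.sum_comm
    _ = ∑ γ, ∑ α, ∑ β, ∑ δ, f α β γ δ := Finset.sum_comm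
    _ = ∑ γ, ∑ β, ∑ α, ∑ δ, f α β γ δ := Finset.sum_congr rfl fun _ _ => Finset.sum_comm

theorem sum_sum_sum_sum_comm_snd_fth (f : ι → ι → ι → ι → M) :
    ∑ α, ∑ β, ∑ γ, ∑ δ, f α β γ δ = ∑ α, ∑ β, ∑ γ, ∑ δ, f α δ γ β :=
  Finset.sum_congr rfl fun α _ =>
    calc ∑ β, ∑ γ, ∑ δ, f α β γ δ
        = ∑ β, ∑ δ, ∑ γ, f α β γ δ := Finset.sum_congr rfl fun _ _ => Finset.sum_comm
      _ = ∑ δ, ∑ β, ∑ γ, f α β γ δ := Finset.sum_comm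
      _ = ∑ δ, ∑ γ, ∑ β, f α β γ δ := Finset.sum_congr rfl fun _ _ => Finset.sum_comm

end FourfoldSum

theorem isHermitian_I_smul_sub_conjTranspose {ι : Type*} (x : Matrix ι ι ℂ) :
    (I • (x - xᴴ)).IsHermitian := by
  rw [IsHermitian, conjTranspose_smul, conjTranspose_sub, conjTranspose_conjTranspose, star_def,
    conj_I, neg_smul, ← smul_neg, neg_sub]

section CurvaturePairing

variable {ι : Type*} [Fintype ι]

def curvaturePairing (F : ι → ι → ι → ι → ℂ) (a b : Matrix ι ι ℂ) : ℂ :=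
  ∑ α, ∑ β, ∑ γ, ∑ δ, F α β γ δ * a α β * b γ δ

def bisectionalSum (F : ι → ι → ι → ι → ℂ) (v w : ι → ℂ) : ℂ :=
  ∑ α, ∑ β, ∑ γ, ∑ δ,
    F α β γ δ * v α * (starRingEnd ℂ) (v β) * w γ * (starRingEnd ℂ) (w δ)

theorem curvaturePairing_add_smul_I (F : ι → ι → ι → ι → ℂ) (x : Matrix ι ι ℂ) :
    curvaturePairing F (I • (x - xᴴ)) (I • (x - xᴴ)) +
        curvaturePairing F (x + xᴴ) (x + xᴴ) =
      2 * (curvaturePairing F x xᴴ + curvaturePairing F xᴴ x) := by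
  simp only [curvaturePairing, ← Finset.sum_add_distrib, Finset.mul_sum]
  refine Finset.sum_congr rfl fun α _ => Finset.sum_congr rfl fun β _ =>
    Finset.sum_congr rfl fun γ _ => Finset.sum_congr rfl fun δ _ => ?_
  simp only [Matrix.smul_apply, Matrix.sub_apply, Matrix.add_apply, smul_eq_mul]
  linear_combination F α β γ δ * (x α β - xᴴ α β) * (x γ δ - xᴴ γ δ) * I_sq

theorem curvaturePairing_comm {F : ι → ι → ι → ι → ℂ}
    (hF : ∀ α β γ δ, F α β γ δ = F γ δ α β) (a b : Matrix ι ι ℂ) :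
    curvaturePairing F a b = curvaturePairing F b a := by
  rw [curvaturePairing, sum_sum_sum_sum_comm_fst_thd, sum_sum_sum_sum_comm_snd_fth]
  refine Finset.sum_congr rfl fun α _ => Finset.sum_congr rfl fun β _ =>
    Finset.sum_congr rfl fun γ _ => Finset.sum_congr rfl fun δ _ => ?_
  rw [hF]
  ring

theorem curvaturePairing_vecMulVec_conjTranspose {F : ι → ι → ι → ι → ℂ}
    (hF : ∀ α β γ δ, F α β γ δ = F α δ γ β) (v w : ι → ℂ) :
    curvaturePairing F (vecMulVec v (star w)) (vecMulVec v (star w))ᴴ = bisectionalSum F v w := by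
  rw [conjTranspose_vecMulVec, star_star, curvaturePairing, sum_sum_sum_sum_comm_snd_fth]
  refine Finset.sum_congr rfl fun α _ => Finset.sum_congr rfl fun β _ =>
    Finset.sum_congr rfl fun γ _ => Finset.sum_congr rfl fun δ _ => ?_
  simp only [vecMulVec_apply, Pi.star_apply, star_def, ← hF]
  ring

theorem curvaturePairing_add_smul_I_vecMulVec {F : ι → ι → ι → ι → ℂ}
    (hF₁ : ∀ α β γ δ, F α β γ δ = F γ β α δ) (hF₂ : ∀ α β γ δ, F α β γ δ = F α δ γ β)
    (v w : ι → ℂ) :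
    let x := vecMulVec v (star w)
    curvaturePairing F (I • (x - xᴴ)) (I • (x - xᴴ)) + curvaturePairing F (x + xᴴ) (x + xᴴ) =
      4 * bisectionalSum F v w := by
  intro x
  have hF : ∀ α β γ δ, F α β γ δ = F γ δ α β := fun α β γ δ => (hF₁ ..).trans (hF₂ ..)
  rw [curvaturePairing_add_smul_I, curvaturePairing_comm hF xᴴ,
    curvaturePairing_vecMulVec_conjTranspose hF₂]
  ring

end CurvaturePairing

theorem stmt_6_general (n : ℕ) (lam : ℝ)
    (g : Matrix (Fin n) (Fin n) ℂ)
    (R : Fin n → Fin n → Fin n → Fin n → ℂ)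
    (hsym1 : ∀ α β γ δ, R α β γ δ = R γ β α δ)
    (hsym2 : ∀ α β γ δ, R α β γ δ = R α δ γ β)
    (hyp : ∀ u : Matrix (Fin n) (Fin n) ℂ, u.IsHermitian →
      (-(∑ α, ∑ β, ∑ γ, ∑ δ, R α β γ δ * u α β * u γ δ)).re ≥
        2 * lam *
          (∑ α, ∑ β, ∑ γ, ∑ δ,
            (g α β * g γ δ + g α δ * g γ β) * u α β * u γ δ).re) :
    ∀ v w : Fin n → ℂ,
      (-(∑ α, ∑ β, ∑ γ, ∑ δ,
          R α β γ δ * v α * (starRingEnd ℂ) (v β) * w γ * (starRingEnd ℂ) (w δ))).re ≥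
        2 * lam *
          (∑ α, ∑ β, ∑ γ, ∑ δ,
            (g α β * g γ δ + g α δ * g γ β) * v α * (starRingEnd ℂ) (v β) * w γ *
              (starRingEnd ℂ) (w δ)).re := by
  intro v w
  set G : Fin n → Fin n → Fin n → Fin n → ℂ := fun α β γ δ => g α β * g γ δ + g α δ * g γ β
  set x := vecMulVec v (star w)
  have h₁ : (-curvaturePairing R (I • (x - xᴴ)) (I • (x - xᴴ))).re ≥
      2 * lam * (curvaturePairing G (I • (x - xᴴ)) (I • (x - xᴴ))).re :=
    hyp _ (isHermitian_I_smul_sub_conjTranspose x)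
  have h₂ : (-curvaturePairing R (x + xᴴ) (x + xᴴ)).re ≥
      2 * lam * (curvaturePairing G (x + xᴴ) (x + xᴴ)).re :=
    hyp _ (isHermitian_add_transpose_self x)
  have hR := congrArg re (curvaturePairing_add_smul_I_vecMulVec hsym1 hsym2 v w)
  have hG := congrArg re (curvaturePairing_add_smul_I_vecMulVec (F := G)
    (fun _ _ _ _ => by ring) (fun _ _ _ _ => by ring) v w)
  simp only [add_re, neg_re, mul_re, re_ofNat, im_ofNat, zero_mul, sub_zero] at h₁ h₂ hR hG
  change (-bisectionalSum R v w).re ≥ 2 * lam * (bisectionalSum G v w).re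
  rw [neg_re]
  linear_combination (h₁ + h₂ - hR - 2 * lam * hG) / 4

/-- Lemma 2.20: if the curvature operator is `≥ 2λ` on real (1,1)-forms (tested against
Hermitian matrices `u`), then the holomorphic bisectional curvature is `≥ 2λ`. -/
theorem stmt_6 (n : ℕ) (hn : 1 ≤ n) (lam : ℝ)
    (g : Matrix (Fin n) (Fin n) ℂ) (hg : g.PosDef)
    (R : Fin n → Fin n → Fin n → Fin n → ℂ)
    (hsym1 : ∀ α β γ δ, R α β γ δ = R γ β α δ)
    (hsym2 : ∀ α β γ δ, R α β γ δ = R α δ γ β)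
    (hsym3 : ∀ α β γ δ, R α β γ δ = R γ δ α β)
    (hconj : ∀ α β γ δ, (starRingEnd ℂ) (R α β γ δ) = R β α δ γ)
    (hyp : ∀ u : Matrix (Fin n) (Fin n) ℂ, u.IsHermitian →
      (-(∑ α, ∑ β, ∑ γ, ∑ δ, R α β γ δ * u α β * u γ δ)).re ≥
        2 * lam *
          (∑ α, ∑ β, ∑ γ, ∑ δ,
            (g α β * g γ δ + g α δ * g γ β) * u α β * u γ δ).re) :
    ∀ v w : Fin n → ℂ,
      (-(∑ α, ∑ β, ∑ γ, ∑ δ,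
          R α β γ δ * v α * (starRingEnd ℂ) (v β) * w γ * (starRingEnd ℂ) (w δ))).re ≥
        2 * lam *
          (∑ α, ∑ β, ∑ γ, ∑ δ,
            (g α β * g γ δ + g α δ * g γ β) * v α * (starRingEnd ℂ) (v β) * w γ *
              (starRingEnd ℂ) (w δ)).re :=
  stmt_6_general n lam g R hsym1 hsym2 hyp
end

section
/- Let n ≥ 3 be an integer, let λ ≥ 0 be real, and let a, a'', b, b', b'' be real numbers with a > 0 and b > 0. Then the following are equivalent. (i) For every nonzero Hermitian (n−1)×(n−1) complex matrix u (indices 1,…,n−1), 0 < (2(1 − λb² − (b')²)/b²) · ( (1/4)(Σ_{α=1}^{n−2} u(α,α))² + (1/4)Σ_{α,β=1}^{n−2} |u(α,β)|² ) + (−a''/(4a) − λ)·|u(n−1,n−1)|² + (−b''/b − λ)·Σ_{α=1}^{n−2} |u(α,n−1)|² + (−b''/b − λ)·u(n−1,n−1)·Σ_{α=1}^{n−2} u(α,α). (ii) All of the following hold: (1) 1 − λb² − (b')² > 0; (2) −a'' > 4λa; (3) −b'' > λb; (4) (2(n−1)(1 − λb² − (b')²)/((n−2)b²)) · (−a''/(4a)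 − λ) > (−b''/b − λ)². -/
/-!
Write the form in terms of the trace `T` and the squared Frobenius norm `S` of the block of `u`
away from the last index `L`, the squared norm `q` of the off-diagonal part of column `L`, and
`t = u L L`. Cauchy–Schwarz gives `T² ≤ (n - 2) S`, which bounds the form below by a binary
quadratic form in `(T, t)` plus nonnegative terms, so (1)–(4) (positivity of the coefficients
and negativity of the discriminant) suffice. Conversely, diagonal test matrices recover all
conditions but (3), which comes from the Hermitian matrix with two off-diagonal ones at
`(α₀, L)` and `(L, α₀)`.
-/

/-- The distinguished last index `n-1` (in the paper's indexing `1,…,n-1`) of the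
matrices appearing in Lemma 2.22. -/
def lastIdx (n : ℕ) (hn : 3 ≤ n) : Fin (n - 1) := ⟨n - 2, by omega⟩

open Finset Matrix

lemma binaryForm_pos {p r s x y : ℝ} (hp : 0 < p) (hdisc : r ^ 2 < 4 * p * s)
    (hxy : x ≠ 0 ∨ y ≠ 0) : 0 < p * x ^ 2 + r * x * y + s * y ^ 2 := by
  rcases eq_or_ne y 0 with rfl | hy
  · have hx : x ≠ 0 := by simpa using hxy
    have : 0 < p * x ^ 2 := by positivity
    simpa using this
  · have hsq : 4 * p * (p * x ^ 2 + r * x * y + s * y ^ 2) =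
        (2 * p * x + r * y) ^ 2 + (4 * p * s - r ^ 2) * y ^ 2 := by ring
    have : 0 < (4 * p * s - r ^ 2) * y ^ 2 := mul_pos (by linarith) (by positivity)
    exact pos_of_mul_pos_right (by nlinarith [sq_nonneg (2 * p * x + r * y)])
      (by positivity : (0 : ℝ) ≤ 4 * p)

-- `T`, `S`, `q`, `t` play the roles described in the header.
lemma curvatureForm_reduced_pos {m A B C T S q t : ℝ} (hm : 0 < m) (hA : 0 < A) (hB : 0 < B)
    (hC : 0 < C) (hdisc : C ^ 2 * m < A * (m + 1) * B) (hTS : T ^ 2 ≤ m * S) (hq : 0 ≤ q)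
    (hne : t ≠ 0 ∨ 0 < S ∨ 0 < q) :
    0 < A * (1 / 4 * T ^ 2 + 1 / 4 * S) + B * t ^ 2 + C * q + C * t * T := by
  have hsplit : A * (1 / 4 * T ^ 2 + 1 / 4 * S) + B * t ^ 2 + C * q + C * t * T =
      (A * (m + 1) / (4 * m) * T ^ 2 + C * T * t + B * t ^ 2) +
        A / (4 * m) * (m * S - T ^ 2) + C * q := by
    field_simp; ring
  have hrest : 0 ≤ A / (4 * m) * (m * S - T ^ 2) + C * q :=
    add_nonneg (mul_nonneg (by positivity) (by linarith)) (by positivity)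
  by_cases hTt : T = 0 ∧ t = 0
  · obtain ⟨rfl, rfl⟩ := hTt
    have hS : 0 ≤ S := nonneg_of_mul_nonneg_right (by simpa using hTS) hm
    rcases hne with h | h | h
    · exact absurd rfl h
    · nlinarith
    · nlinarith
  · have hdisc' : C ^ 2 < 4 * (A * (m + 1) / (4 * m)) * B := by
      rwa [show 4 * (A * (m + 1) / (4 * m)) * B = A * (m + 1) * B / m by field_simp,
        lt_div_iff₀ hm]
    have := binaryForm_pos (by positivity) hdisc' (not_and_or.mp hTt)
    rw [hsplit]
    linarith

section CurvatureForm

variable {ι : Type*}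

lemma sq_sum_re_diag_le_card_mul_sum_norm_sq (u : Matrix ι ι ℂ) (s : Finset ι) :
    (∑ α ∈ s, (u α α).re) ^ 2 ≤ s.card * ∑ α ∈ s, ∑ β ∈ s, ‖u α β‖ ^ 2 := by
  refine (sq_sum_le_card_mul_sum_sq (s := s) (f := fun α => (u α α).re)).trans ?_
  gcongr with α hα
  calc (u α α).re ^ 2 ≤ ‖u α α‖ ^ 2 := sq_le_sq.mpr (by simpa using Complex.abs_re_le_norm _)
    _ ≤ ∑ β ∈ s, ‖u α β‖ ^ 2 :=
      single_le_sum (f := fun β => ‖u α β‖ ^ 2) (fun _ _ => by positivity) hα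

lemma Matrix.IsHermitian.norm_apply_self_sq {u : Matrix ι ι ℂ} (hu : u.IsHermitian) (i : ι) :
    ‖u i i‖ ^ 2 = (u i i).re ^ 2 := by
  rw [← hu.coe_re_apply_self i]
  simp

variable [Fintype ι] [DecidableEq ι]

-- In the paper's notation `A = 2(1 - λb² - b'²)/b²`, `B = -a''/(4a) - λ`, `C = -b''/b - λ`,
-- and `L` is the index `n - 1`.
noncomputable def curvatureForm (A B C : ℝ) (L : ι) (u : Matrix ι ι ℂ) : ℝ :=
  A * ((1 / 4) * (∑ α ∈ univ.filter (fun α => α ≠ L), (u α α).re) ^ 2 +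
      (1 / 4) * ∑ α ∈ univ.filter (fun α => α ≠ L),
        ∑ β ∈ univ.filter (fun β => β ≠ L), ‖u α β‖ ^ 2) +
    B * ‖u L L‖ ^ 2 +
    C * ∑ α ∈ univ.filter (fun α => α ≠ L), ‖u α L‖ ^ 2 +
    C * (u L L).re * ∑ α ∈ univ.filter (fun α => α ≠ L), (u α α).re

lemma card_filter_ne_eq (L : ι) :
    ((univ.filter fun α => α ≠ L).card : ℝ) = Fintype.card ι - 1 := by
  rw [filter_ne', card_erase_of_mem (mem_univ L), card_univ,
    Nat.cast_sub (Fintype.card_pos_iff.mpr ⟨L⟩), Nat.cast_one]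

lemma Matrix.IsHermitian.eq_zero_of_blocks {u : Matrix ι ι ℂ} (hu : u.IsHermitian) (L : ι)
    (hS : ∑ α ∈ univ.filter (fun α => α ≠ L),
      ∑ β ∈ univ.filter (fun β => β ≠ L), ‖u α β‖ ^ 2 = 0)
    (hq : ∑ α ∈ univ.filter (fun α => α ≠ L), ‖u α L‖ ^ 2 = 0) (ht : (u L L).re = 0) :
    u = 0 := by
  have hS' := fun α hα => (sum_eq_zero_iff_of_nonneg (fun _ _ => by positivity)).mp
    ((sum_eq_zero_iff_of_nonneg (fun _ _ => by positivity)).mp hS α hα)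
  have hq' := (sum_eq_zero_iff_of_nonneg (fun _ _ => by positivity)).mp hq
  simp only [mem_filter, mem_univ, true_and, ne_eq, OfNat.ofNat_ne_zero, not_false_eq_true,
    pow_eq_zero_iff, norm_eq_zero] at hS' hq'
  ext i j
  by_cases hi : i = L <;> by_cases hj : j = L <;> subst_vars
  · rw [← hu.coe_re_apply_self]; simp [ht]
  · rw [zero_apply, ← hu.apply, hq' j hj, star_zero]
  · exact hq' i hi
  · exact hS' i hi j hj

lemma curvatureForm_diagonal (A B C : ℝ) (L : ι) (x y : ℝ) :
    curvatureForm A B C L (diagonal fun i => ((if i = L then y else x : ℝ) : ℂ)) =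
      A * (1 / 4 * ((Fintype.card ι - 1) * x) ^ 2 + 1 / 4 * ((Fintype.card ι - 1) * x ^ 2)) +
        B * y ^ 2 + C * y * ((Fintype.card ι - 1) * x) := by
  set u := diagonal fun i => ((if i = L then y else x : ℝ) : ℂ)
  set P := univ.filter (fun α => α ≠ L)
  have hdiag : ∀ α ∈ P, (u α α).re = x := fun α hα => by simp_all [u, P]
  have hcol : ∀ α ∈ P, ‖u α L‖ ^ 2 = 0 := fun α hα => by simp_all [u, P]
  have hblock : ∀ α ∈ P, ∑ β ∈ P, ‖u α β‖ ^ 2 = x ^ 2 := by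
    intro α hα
    rw [sum_eq_single_of_mem α hα (fun β _ hβ => by simp [u, diagonal_apply_ne _ hβ.symm])]
    simp_all [u, P]
  rw [curvatureForm, sum_congr rfl hdiag, sum_congr rfl hcol, sum_congr rfl hblock]
  have hcard : (P.card : ℝ) = Fintype.card ι - 1 := card_filter_ne_eq L
  simp only [sum_const, nsmul_eq_mul, hcard]
  simp [u]

lemma curvatureForm_single_add_single (A B C : ℝ) {L α₀ : ι} (h : α₀ ≠ L) :
    curvatureForm A B C L (single α₀ L 1 + single L α₀ 1) = C := by
  set u : Matrix ι ι ℂ := single α₀ L 1 + single L α₀ 1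
  set P := univ.filter (fun α => α ≠ L)
  have hblock : ∀ α ∈ P, ∀ β ∈ P, u α β = 0 := fun α hα β hβ => by
    simp_all [u, P, eq_comm]
  have hcol : ∀ α ∈ P, ‖u α L‖ ^ 2 = if α = α₀ then 1 else 0 := fun α hα => by
    by_cases hα₀ : α = α₀ <;> simp_all [u, P, eq_comm]
  have hLL : u L L = 0 := by simp [u, h]
  rw [curvatureForm, sum_congr rfl hcol, sum_ite_eq', if_pos (by simpa [P] using h), hLL,
    sum_congr rfl fun α hα => sum_congr rfl fun β hβ => by rw [hblock α hα β hβ],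
    sum_congr rfl fun α hα => by rw [hblock α hα α hα]]
  simp

lemma curvatureForm_pos {A B C : ℝ} (hι : 1 < Fintype.card ι) (L : ι) (hA : 0 < A) (hB : 0 < B)
    (hC : 0 < C) (hdisc : C ^ 2 * (Fintype.card ι - 1) < A * Fintype.card ι * B)
    {u : Matrix ι ι ℂ} (hu : u.IsHermitian) (hne : u ≠ 0) : 0 < curvatureForm A B C L u := by
  set P := univ.filter (fun α => α ≠ L)
  have hm : (0 : ℝ) < Fintype.card ι - 1 := sub_pos.mpr (by exact_mod_cast hι)
  have hTS := sq_sum_re_diag_le_card_mul_sum_norm_sq u P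
  rw [card_filter_ne_eq L] at hTS
  have hnondeg : (u L L).re ≠ 0 ∨ 0 < ∑ α ∈ P, ∑ β ∈ P, ‖u α β‖ ^ 2 ∨
      0 < ∑ α ∈ P, ‖u α L‖ ^ 2 := by
    by_contra! h
    exact hne (hu.eq_zero_of_blocks L (h.2.1.antisymm (by positivity))
      (h.2.2.antisymm (by positivity)) h.1)
  rw [curvatureForm, hu.norm_apply_self_sq]
  exact curvatureForm_reduced_pos hm hA hB hC (by rwa [sub_add_cancel]) hTS (by positivity)
    hnondeg

lemma coeffs_pos_of_curvatureForm_pos {A B C : ℝ} (hι : 1 < Fintype.card ι) (L : ι)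
    (h : ∀ u : Matrix ι ι ℂ, u.IsHermitian → u ≠ 0 → 0 < curvatureForm A B C L u) :
    0 < A ∧ 0 < B ∧ 0 < C ∧ C ^ 2 * (Fintype.card ι - 1) < A * Fintype.card ι * B := by
  obtain ⟨α₀, hα₀⟩ := Fintype.exists_ne_of_one_lt_card hι L
  set m : ℝ := Fintype.card ι - 1
  have hm : 0 < m := sub_pos.mpr (by exact_mod_cast hι)
  have hdiag : ∀ x y : ℝ, x ≠ 0 ∨ y ≠ 0 →
      0 < A * (1 / 4 * (m * x) ^ 2 + 1 / 4 * (m * x ^ 2)) + B * y ^ 2 + C * y * (m * x) := by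
    intro x y hxy
    rw [← curvatureForm_diagonal]
    refine h _ (isHermitian_diagonal_iff.mpr fun i => Complex.conj_ofReal _) fun h0 => ?_
    have h0 := diagonal_eq_zero.mp h0
    rcases hxy with hx | hy
    · exact hx (by simpa [hα₀] using congrFun h0 α₀)
    · exact hy (by simpa using congrFun h0 L)
  have hA : 0 < A := pos_of_mul_pos_left (by simpa using hdiag 1 0 (by norm_num)) (by positivity)
  have hB : 0 < B := by simpa using hdiag 0 1 (by norm_num)
  have hC : 0 < C := by
    rw [← curvatureForm_single_add_single A B C hα₀]
    refine h _ ?_ fun h0 => by simpa [hα₀] using congrFun (congrFun h0 α₀) L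
    simp [IsHermitian, conjTranspose_single, add_comm]
  -- With `y = 1` the diagonal test is a quadratic in `x` without real roots.
  have hquad := discrim_lt_zero (K := ℝ) (a := A * (m * (m + 1)) / 4) (b := C * m) (c := B)
    (by positivity) fun x => by linarith [hdiag x 1 (by norm_num)]
  refine ⟨hA, hB, hC, ?_⟩
  rw [discrim] at hquad
  nlinarith

theorem curvatureForm_pos_iff {A B C : ℝ} (hι : 1 < Fintype.card ι) (L : ι) :
    (∀ u : Matrix ι ι ℂ, u.IsHermitian → u ≠ 0 → 0 < curvatureForm A B C L u) ↔
      0 < A ∧ 0 < B ∧ 0 < C ∧ C ^ 2 * (Fintype.card ι - 1) < A * Fintype.card ι * B :=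
  ⟨coeffs_pos_of_curvatureForm_pos hι L, fun ⟨hA, hB, hC, hdisc⟩ _ hu hne =>
    curvatureForm_pos hι L hA hB hC hdisc hu hne⟩

end CurvatureForm

theorem stmt_7_general (n : ℕ) (hn : 3 ≤ n) (lam : ℝ)
    (a app b bp bpp : ℝ) (ha : 0 < a) (hb : 0 < b) :
    (∀ u : Matrix (Fin (n - 1)) (Fin (n - 1)) ℂ, u.IsHermitian → u ≠ 0 →
      0 < (2 * (1 - lam * b ^ 2 - bp ^ 2) / b ^ 2) *
            ((1 / 4) * (∑ α ∈ Finset.univ.filter (fun α : Fin (n - 1) => α ≠ lastIdx n hn),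
                (u α α).re) ^ 2 +
              (1 / 4) * ∑ α ∈ Finset.univ.filter (fun α : Fin (n - 1) => α ≠ lastIdx n hn),
                ∑ β ∈ Finset.univ.filter (fun β : Fin (n - 1) => β ≠ lastIdx n hn),
                  ‖u α β‖ ^ 2) +
          (-app / (4 * a) - lam) * ‖u (lastIdx n hn) (lastIdx n hn)‖ ^ 2 +
          (-bpp / b - lam) *
            ∑ α ∈ Finset.univ.filter (fun α : Fin (n - 1) => α ≠ lastIdx n hn),
              ‖u α (lastIdx n hn)‖ ^ 2 +
          (-bpp / b - lam) * (u (lastIdx n hn) (lastIdx n hn)).re *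
            ∑ α ∈ Finset.univ.filter (fun α : Fin (n - 1) => α ≠ lastIdx n hn), (u α α).re)
      ↔
    (0 < 1 - lam * b ^ 2 - bp ^ 2 ∧
      -app > 4 * lam * a ∧
      -bpp > lam * b ∧
      2 * ((n : ℝ) - 1) * (1 - lam * b ^ 2 - bp ^ 2) / (((n : ℝ) - 2) * b ^ 2) *
          (-app / (4 * a) - lam) > (-bpp / b - lam) ^ 2) := by
  have hcard : (Fintype.card (Fin (n - 1)) : ℝ) = n - 1 := by
    rw [Fintype.card_fin, Nat.cast_sub (by omega), Nat.cast_one]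
  have hm : (0 : ℝ) < n - 2 := by
    have : (3 : ℝ) ≤ n := by exact_mod_cast hn
    linarith
  set X := 1 - lam * b ^ 2 - bp ^ 2
  set B := -app / (4 * a) - lam
  refine (curvatureForm_pos_iff (by simp; omega) (lastIdx n hn)).trans ?_
  rw [hcard]
  refine and_congr ?_ (and_congr ?_ (and_congr ?_ ?_))
  · rw [div_pos_iff_of_pos_right (by positivity)]
    constructor <;> intro h <;> linarith
  · rw [sub_pos, lt_div_iff₀ (by positivity)]
    constructor <;> intro h <;> linarith
  · rw [sub_pos, lt_div_iff₀ hb]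
  · have hfactor : 2 * ((n : ℝ) - 1) * X / ((n - 2) * b ^ 2) * B =
        2 * X / b ^ 2 * (n - 1) * B / (n - 2) := by
      field_simp
    rw [gt_iff_lt, hfactor, lt_div_iff₀ hm, sub_sub, one_add_one_eq_two]

/-- Lemma 2.22: the curvature operator of the doubly warped product metric
`dr² + a²(r) η² + b²(r) gᵀ` is strictly greater than `2λ` on real (1,1)-forms
if and only if the four inequalities (1)–(4) on `a, a'', b, b', b''` hold. -/
theorem stmt_7 (n : ℕ) (hn : 3 ≤ n) (lam : ℝ) (hlam : 0 ≤ lam)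
    (a app b bp bpp : ℝ) (ha : 0 < a) (hb : 0 < b) :
    (∀ u : Matrix (Fin (n - 1)) (Fin (n - 1)) ℂ, u.IsHermitian → u ≠ 0 →
      0 < (2 * (1 - lam * b ^ 2 - bp ^ 2) / b ^ 2) *
            ((1 / 4) * (∑ α ∈ Finset.univ.filter (fun α : Fin (n - 1) => α ≠ lastIdx n hn),
                (u α α).re) ^ 2 +
              (1 / 4) * ∑ α ∈ Finset.univ.filter (fun α : Fin (n - 1) => α ≠ lastIdx n hn),
                ∑ β ∈ Finset.univ.filter (fun β : Fin (n - 1) => β ≠ lastIdx n hn),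
                  ‖u α β‖ ^ 2) +
          (-app / (4 * a) - lam) * ‖u (lastIdx n hn) (lastIdx n hn)‖ ^ 2 +
          (-bpp / b - lam) *
            ∑ α ∈ Finset.univ.filter (fun α : Fin (n - 1) => α ≠ lastIdx n hn),
              ‖u α (lastIdx n hn)‖ ^ 2 +
          (-bpp / b - lam) * (u (lastIdx n hn) (lastIdx n hn)).re *
            ∑ α ∈ Finset.univ.filter (fun α : Fin (n - 1) => α ≠ lastIdx n hn), (u α α).re)
      ↔
    (0 < 1 - lam * b ^ 2 - bp ^ 2 ∧
      -app > 4 * lam * a ∧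
      -bpp > lam * b ∧
      2 * ((n : ℝ) - 1) * (1 - lam * b ^ 2 - bp ^ 2) / (((n : ℝ) - 2) * b ^ 2) *
          (-app / (4 * a) - lam) > (-bpp / b - lam) ^ 2) :=
  stmt_7_general n hn lam a app b bp bpp ha hb
end

section
/- Let E be a finite-dimensional real inner product space, let V₁ be a subspace with orthogonal complement V₂, and let M₁ be a subspace with orthogonal complement M₂. Assume V₁ ≠ {0}, V₂ ≠ {0}, dim M₁ ≥ 2 and dim M₂ ≥ 2. Suppose that for every v ∈ M₁ and every w ∈ M₂, writing v = v₁ + v₂ and w = w₁ + w₂ with v₁, w₁ ∈ V₁ and v₂, w₂ ∈ V₂ (orthogonal projections), the pair (v₁, w₁) is linearly dependent and the pair (v₂, w₂) is linearly dependent. Then either M₁ = V₁ and M₂ = V₂, or M₁ = V₂ and M₂ = V₁. -/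
/-!
If `v ∈ M₁` had nonzero components `p ∈ V₁` and `q ∈ V₁ᗮ`, the dependence hypotheses would put
every `w ∈ M₁ᗮ` into the plane `span {p, q}`, which contains `v ∉ M₁ᗮ`; so `M₁ᗮ` would have
dimension at most one. Hence every vector of `M₁` lies in `V₁` or in `V₁ᗮ`, and a subspace
contained in the union of two subspaces is contained in one of them. The same holds for `M₁ᗮ`,
and passing to orthogonal complements leaves only the two announced configurations.
-/

open Module Submodule RealInnerProductSpace

theorem mem_span_singleton_of_not_linearIndependent {K V : Type*} [Field K] [AddCommGroup V]
    [Module K V] {x y : V} (hx : x ≠ 0) (h : ¬ LinearIndependent K ![x, y]) : y ∈ K ∙ x := by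
  rw [LinearIndependent.pair_iff' hx, not_forall_not] at h
  exact mem_span_singleton.2 h

namespace Submodule

variable {E : Type*} [NormedAddCommGroup E] [InnerProductSpace ℝ E]
  (K : Submodule ℝ E) [K.HasOrthogonalProjection]

theorem finrank_le_one_of_forall_not_linearIndependent {v : E}
    (hp : K.starProjection v ≠ 0) (hq : v - K.starProjection v ≠ 0) {N : Submodule ℝ E}
    (horth : ∀ w ∈ N, ⟪v, w⟫ = 0)
    (hdep : ∀ w ∈ N, ¬ LinearIndependent ℝ ![K.starProjection v, K.starProjection w] ∧
      ¬ LinearIndependent ℝ ![v - K.starProjection v, w - K.starProjection w]) :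
    finrank ℝ N ≤ 1 := by
  classical
  set S := span ℝ ({K.starProjection v, v - K.starProjection v} : Set E)
  have hNS : N ≤ S := fun w hw => by
    obtain ⟨a, ha⟩ := mem_span_singleton.1
      (mem_span_singleton_of_not_linearIndependent hp (hdep w hw).1)
    obtain ⟨b, hb⟩ := mem_span_singleton.1
      (mem_span_singleton_of_not_linearIndependent hq (hdep w hw).2)
    exact mem_span_pair.2 ⟨a, b, by rw [ha, hb, add_sub_cancel]⟩
  have hvS : v ∈ S := mem_span_pair.2 ⟨1, 1, by rw [one_smul, one_smul, add_sub_cancel]⟩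
  have hvN : v ∉ N := fun hv => hp <| by
    rw [inner_self_eq_zero.1 (horth v hv), map_zero]
  have : FiniteDimensional ℝ S := .span_of_finite ℝ (Set.toFinite _)
  have hS : finrank ℝ S ≤ 2 := by
    have := finrank_span_finset_le_card (R := ℝ)
      ({K.starProjection v, v - K.starProjection v} : Finset E)
    rw [Finset.coe_pair] at this
    exact this.trans Finset.card_le_two
  have := finrank_lt_finrank_of_lt (SetLike.lt_iff_le_and_exists.2 ⟨hNS, v, hvS, hvN⟩)
  omega

theorem le_or_le_orthogonal_of_forall_not_linearIndependent {M N : Submodule ℝ E}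
    (hN : 2 ≤ finrank ℝ N) (horth : N ≤ Mᗮ)
    (hdep : ∀ v ∈ M, ∀ w ∈ N,
      ¬ LinearIndependent ℝ ![K.starProjection v, K.starProjection w] ∧
      ¬ LinearIndependent ℝ ![v - K.starProjection v, w - K.starProjection w]) :
    M ≤ K ∨ M ≤ Kᗮ := by
  rw [← AddSubgroupClass.subset_union]
  intro v hv
  by_contra hvK
  rw [Set.mem_union, not_or] at hvK
  have hp : K.starProjection v ≠ 0 := fun h => hvK.2 (K.starProjection_apply_eq_zero_iff.1 h)
  have hq : v - K.starProjection v ≠ 0 := fun h =>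
    hvK.1 (starProjection_eq_self_iff.1 (sub_eq_zero.1 h).symm)
  have := K.finrank_le_one_of_forall_not_linearIndependent hp hq
    (fun w hw => inner_right_of_mem_orthogonal hv (horth hw)) (hdep v hv)
  omega

end Submodule

/-- The linear-algebraic splitting argument from the proof of Theorem A (Section 5):
if every `v ∈ M₁`, `w ∈ M₁ᗮ` have linearly dependent `V₁`-components and linearly
dependent `V₁ᗮ`-components, then the two orthogonal decompositions coincide. -/
theorem stmt_9 {E : Type*} [NormedAddCommGroup E] [InnerProductSpace ℝ E]
    [FiniteDimensional ℝ E]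
    (V₁ M₁ : Submodule ℝ E)
    (hV₁ : V₁ ≠ ⊥) (hV₂ : V₁ᗮ ≠ ⊥)
    (hM₁ : 2 ≤ Module.finrank ℝ M₁) (hM₂ : 2 ≤ Module.finrank ℝ M₁ᗮ)
    (hdep : ∀ v ∈ M₁, ∀ w ∈ M₁ᗮ,
      ¬ LinearIndependent ℝ
          ![((V₁.orthogonalProjectionOnto v : V₁) : E), ((V₁.orthogonalProjectionOnto w : V₁) : E)] ∧
      ¬ LinearIndependent ℝ
          ![v - ((V₁.orthogonalProjectionOnto v : V₁) : E),
            w - ((V₁.orthogonalProjectionOnto w : V₁) : E)]) :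
    (M₁ = V₁ ∧ M₁ᗮ = V₁ᗮ) ∨ (M₁ = V₁ᗮ ∧ M₁ᗮ = V₁) := by
  simp only [coe_orthogonalProjectionOnto_apply] at hdep
  have hdep' : ∀ v ∈ M₁ᗮ, ∀ w ∈ M₁,
      ¬ LinearIndependent ℝ ![V₁.starProjection v, V₁.starProjection w] ∧
      ¬ LinearIndependent ℝ ![v - V₁.starProjection v, w - V₁.starProjection w] :=
    fun v hv w hw => ⟨LinearIndependent.pair_symm_iff.not.1 (hdep w hw v hv).1,
      LinearIndependent.pair_symm_iff.not.1 (hdep w hw v hv).2⟩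
  rcases V₁.le_or_le_orthogonal_of_forall_not_linearIndependent hM₂ le_rfl hdep
    with h₁ | h₁ <;>
    rcases V₁.le_or_le_orthogonal_of_forall_not_linearIndependent hM₁
      (orthogonal_orthogonal M₁).ge hdep' with h₂ | h₂
  · exact absurd ((orthogonal_disjoint V₁).symm.eq_bot_of_le
      ((orthogonal_le_iff_orthogonal_le.1 h₂).trans h₁)) hV₂
  · exact .inl ⟨h₁.antisymm (orthogonal_le_orthogonal_iff.1 h₂),
      h₂.antisymm (orthogonal_le h₁)⟩
  · exact .inr ⟨h₁.antisymm (orthogonal_le_iff_orthogonal_le.1 h₂),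
      h₂.antisymm (le_orthogonal_iff_le_orthogonal.1 h₁)⟩
  · exact absurd ((orthogonal_disjoint V₁).eq_bot_of_le
      ((le_orthogonal_iff_le_orthogonal.1 h₁).trans h₂)) hV₁
end

section
/- Let L > 0 and let a : ℝ → ℝ be infinitely differentiable with a(s) > 0 for all s ∈ (0,L), a(0) = a(L) = 0, a'(0) = 1, a'(L) = −1, and with all even-order derivatives of a vanishing at both 0 and L (i.e., a^{(2k)}(0) = a^{(2k)}(L) = 0 for every k ≥ 0). Define b(s) = √(2·∫₀ˢ a(τ) dτ) for s ∈ [0,L]. Then b extends to a function that is infinitely differentiable on an open interval containing [0,L] and satisfies: b(0) = 0, b'(0) = 1, all even-order derivatives of b vanish at 0 (b^{(2k)}(0) = 0 for every k ≥ 0), all odd-order derivatives of b vanish at L (b^{(2k+1)}(L) = 0 for every k ≥ 0), and b(L) > 0. -/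
/-!
Write `g s = 2 ∫₀ˢ a`. Since `g 0 = g' 0 = 0`, Hadamard's lemma (applied twice) gives a smooth `h`
with `g s = s² h s`, and the Leibniz rule gives `g⁽ⁿ⁺²⁾(0) = (n + 2)(n + 1) h⁽ⁿ⁾(0)`; hence
`h 0 = a' 0 = 1` and the odd derivatives of `h` vanish at `0`. As `g > 0` on `(0, L]`, `h > 0` on
`[0, L]`, so `b s = s √(h s)` is smooth near `[0, L]` and `b² = g` there.

The parity conditions all come from one observation: if `q x ≠ 0` and the odd derivatives of `q²`
vanish at `x`, so do those of `q`, because `(q²)⁽ᵐ⁾ = 2 q q⁽ᵐ⁾ + (terms with a factor q⁽ʲ⁾, j < m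
odd)`. Applied to `q = √h` at `0` it makes `b = s q` have vanishing even derivatives at `0`;
applied to `q = b` at `L` it transfers `g⁽²ᵏ⁺¹⁾(L) = 2 a⁽²ᵏ⁾(L) = 0` to `b`.
-/

open Set Filter Topology MeasureTheory
open scoped ContDiff

section ParametricIntervalIntegral

variable {F : ℝ × ℝ → ℝ} (a b : ℝ)

theorem hasDerivAt_intervalIntegral_of_contDiff (hF : ContDiff ℝ 1 F) (s₀ : ℝ) :
    HasDerivAt (fun s => ∫ t in a..b, F (t, s))
      (∫ t in a..b, fderiv ℝ F (t, s₀) (0, 1)) s₀ := by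
  have hF' : Continuous fun p => fderiv ℝ F p (0, 1) :=
    (hF.continuous_fderiv one_ne_zero).clm_apply continuous_const
  obtain ⟨C, hC⟩ := (isCompact_uIcc.prod (isCompact_closedBall s₀ 1)).exists_bound_of_continuousOn
    hF'.continuousOn
  have hslice {G : ℝ × ℝ → ℝ} (hG : Continuous G) (s : ℝ) : Continuous fun t => G (t, s) := by
    fun_prop
  refine (intervalIntegral.hasDerivAt_integral_of_dominated_loc_of_deriv_le
    (F := fun s t => F (t, s)) (bound := fun _ => C) (Metric.closedBall_mem_nhds s₀ one_pos)
    (.of_forall fun s => (hslice hF.continuous s).aestronglyMeasurable)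
    ((hslice hF.continuous s₀).intervalIntegrable a b)
    (hslice hF' s₀).aestronglyMeasurable
    (.of_forall fun t ht s hs => hC (t, s) ⟨uIoc_subset_uIcc ht, hs⟩)
    intervalIntegrable_const
    (.of_forall fun t _ s _ => ?_)).2
  exact ((hF.differentiable one_ne_zero) (t, s)).hasFDerivAt.comp_hasDerivAt s
    ((hasDerivAt_const s t).prodMk (hasDerivAt_id s))

theorem contDiff_intervalIntegral_of_contDiff {n : ℕ} (hF : ContDiff ℝ n F) :
    ContDiff ℝ n (fun s => ∫ t in a..b, F (t, s)) := by
  induction n generalizing F with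
  | zero =>
    rw [Nat.cast_zero, contDiff_zero] at hF ⊢
    exact intervalIntegral.continuous_parametric_intervalIntegral_of_continuous'
      (f := fun s t => F (t, s)) (hF.comp continuous_swap) a b
  | succ n ih =>
    have hF1 : ContDiff ℝ 1 F := hF.of_le (by exact_mod_cast Nat.le_add_left 1 n)
    have hF' : ContDiff ℝ n fun p => fderiv ℝ F p (0, 1) :=
      (hF.fderiv_right le_rfl).clm_apply contDiff_const
    push_cast
    rw [contDiff_succ_iff_deriv]
    refine ⟨fun s => (hasDerivAt_intervalIntegral_of_contDiff a b hF1 s).differentiableAt,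
      by simp, ?_⟩
    rw [funext fun s => (hasDerivAt_intervalIntegral_of_contDiff a b hF1 s).deriv]
    exact ih hF'

end ParametricIntervalIntegral

theorem iteratedDeriv_pow_mul_zero {𝕜 : Type*} [NontriviallyNormedField 𝕜] {f : 𝕜 → 𝕜}
    (n m : ℕ) (hf : ContDiffAt 𝕜 (n + m : ℕ) f 0) :
    iteratedDeriv (n + m) (fun s => s ^ m * f s) 0
      = (n + m).choose m * m.factorial * iteratedDeriv n f 0 := by
  rw [iteratedDeriv_fun_mul (by fun_prop) hf, Finset.sum_eq_single m]
  · simp [iteratedDeriv_fun_pow_zero, -iteratedDeriv_pow]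
  · intro i _ hi
    simp [iteratedDeriv_fun_pow_zero, -iteratedDeriv_pow, hi]
  · simp

theorem exists_contDiff_eq_mul_of_eq_zero {f : ℝ → ℝ} (hf : ContDiff ℝ ∞ f) (h0 : f 0 = 0) :
    ∃ F : ℝ → ℝ, ContDiff ℝ ∞ F ∧ ∀ s, f s = s * F s := by
  have hf' : ContDiff ℝ ∞ (deriv f) := (contDiff_infty_iff_deriv.1 hf).2
  have hF : ContDiff ℝ ∞ fun s => ∫ t in (0:ℝ)..1, deriv f (t * s) :=
    contDiff_infty.2 fun n => contDiff_intervalIntegral_of_contDiff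
      (F := fun p => deriv f (p.1 * p.2)) 0 1
      ((hf'.comp (contDiff_fst.mul contDiff_snd)).of_le (WithTop.coe_le_coe.2 le_top))
  refine ⟨_, hF, fun s => ?_⟩
  rcases eq_or_ne s 0 with rfl | hs
  · simpa using h0
  rw [intervalIntegral.integral_comp_mul_right _ hs, zero_mul, one_mul,
    intervalIntegral.integral_deriv_eq_sub
      (fun x _ => (hf.differentiable (by simp)).differentiableAt)
      (hf'.continuous.intervalIntegrable 0 s),
    h0, sub_zero, smul_eq_mul, mul_inv_cancel_left₀ hs]

theorem exists_contDiff_eq_sq_mul_of_eq_zero {f : ℝ → ℝ} (hf : ContDiff ℝ ∞ f) (h0 : f 0 = 0)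
    (h0' : deriv f 0 = 0) : ∃ F : ℝ → ℝ, ContDiff ℝ ∞ F ∧ ∀ s, f s = s ^ 2 * F s := by
  obtain ⟨F₁, hF₁, hfF₁⟩ := exists_contDiff_eq_mul_of_eq_zero hf h0
  have hF₁0 : F₁ 0 = 0 := by
    have := iteratedDeriv_pow_mul_zero 0 1 (hF₁.contDiffAt.of_le (WithTop.coe_le_coe.2 le_top))
    simpa [← funext hfF₁, h0'] using this.symm
  obtain ⟨F, hF, hF₁F⟩ := exists_contDiff_eq_mul_of_eq_zero hF₁ hF₁0
  exact ⟨F, hF, fun s => by rw [hfF₁, hF₁F]; ring⟩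

theorem iteratedDeriv_odd_eq_zero_of_mul_self {q : ℝ → ℝ} {x : ℝ} (hq : ContDiffAt ℝ ∞ q x)
    (hqx : q x ≠ 0) (hsq : ∀ m, Odd m → iteratedDeriv m (fun s => q s * q s) x = 0) {m : ℕ}
    (hm : Odd m) : iteratedDeriv m q x = 0 := by
  induction m using Nat.strong_induction_on with
  | _ m ih =>
  have hm0 : 0 ≠ m := by rintro rfl; simp at hm
  have hleib := hsq m hm
  rw [iteratedDeriv_fun_mul (hq.of_le (WithTop.coe_le_coe.2 le_top))
    (hq.of_le (WithTop.coe_le_coe.2 le_top)),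
    Finset.sum_eq_add_of_mem 0 m (by simp) (by simp) hm0] at hleib
  · simp only [Nat.choose_zero_right, Nat.choose_self, Nat.cast_one, one_mul, iteratedDeriv_zero,
      Nat.sub_zero, Nat.sub_self] at hleib
    have : 2 * q x * iteratedDeriv m q x = 0 := by linarith
    simpa [hqx] using this
  · rintro i hi ⟨hi0, him⟩
    have him' : i < m := by simp at hi; omega
    rcases Nat.even_or_odd i with hi_even | hi_odd
    · rw [ih (m - i) (by omega) (Nat.Odd.sub_even him'.le hm hi_even), mul_zero]
    · rw [ih i him' hi_odd, mul_zero, zero_mul]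

theorem iteratedDeriv_odd_sqrt_eq_zero {h : ℝ → ℝ} {x : ℝ} (hh : ContDiffAt ℝ ∞ h x)
    (hx : 0 < h x) (hodd : ∀ m, Odd m → iteratedDeriv m h x = 0) {m : ℕ} (hm : Odd m) :
    iteratedDeriv m (fun s => √(h s)) x = 0 := by
  refine iteratedDeriv_odd_eq_zero_of_mul_self (hh.sqrt hx.ne') (Real.sqrt_pos.2 hx).ne'
    (fun m hm => ?_) hm
  have hsq : (fun s => √(h s) * √(h s)) =ᶠ[𝓝 x] h :=
    (hh.continuousAt.eventually (eventually_gt_nhds hx)).mono fun s hs => Real.mul_self_sqrt hs.le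
  rw [hsq.iteratedDeriv_eq, hodd m hm]

theorem iteratedDeriv_even_self_mul_eq_zero {q : ℝ → ℝ} (hq : ContDiffAt ℝ ∞ q 0)
    (hodd : ∀ m, Odd m → iteratedDeriv m q 0 = 0) (k : ℕ) :
    iteratedDeriv (2 * k) (fun s => s * q s) 0 = 0 := by
  rcases k.eq_zero_or_pos with rfl | hk
  · simp
  obtain ⟨j, hj⟩ : ∃ j, 2 * k = j + 1 := ⟨2 * k - 1, by omega⟩
  have := iteratedDeriv_pow_mul_zero j 1 (hq.of_le (WithTop.coe_le_coe.2 le_top))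
  rw [hodd j ⟨k - 1, by omega⟩] at this
  simpa [hj] using this

theorem exists_Ioo_subset_of_Icc_subset {U : Set ℝ} (hU : IsOpen U) {x y : ℝ} (hxy : x ≤ y)
    (h : Icc x y ⊆ U) : ∃ c d, c < x ∧ y < d ∧ Ioo c d ⊆ U := by
  obtain ⟨c, hc, hcU⟩ := exists_Ioc_subset_of_mem_nhds (hU.mem_nhds (h (left_mem_Icc.2 hxy)))
    ⟨x - 1, by linarith⟩
  obtain ⟨d, hd, hdU⟩ := exists_Ico_subset_of_mem_nhds (hU.mem_nhds (h (right_mem_Icc.2 hxy)))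
    ⟨y + 1, by linarith⟩
  refine ⟨c, d, hc, hd, fun s hs => ?_⟩
  rcases le_or_gt s x with hsx | hxs
  · exact hcU ⟨hs.1, hsx⟩
  rcases le_or_gt s y with hsy | hys
  · exact h ⟨hxs.le, hsy⟩
  · exact hdU ⟨hys.le, hs.2⟩

section TwoMulIntegral

variable {a : ℝ → ℝ}

theorem hasDerivAt_two_mul_integral (ha : Continuous a) (s : ℝ) :
    HasDerivAt (fun s => 2 * ∫ τ in (0:ℝ)..s, a τ) (2 * a s) s :=
  (ha.integral_hasStrictDerivAt 0 s).hasDerivAt.const_mul 2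

theorem contDiff_two_mul_integral (ha : ContDiff ℝ ∞ a) :
    ContDiff ℝ ∞ (fun s => 2 * ∫ τ in (0:ℝ)..s, a τ) := by
  rw [contDiff_infty_iff_deriv, funext fun s => (hasDerivAt_two_mul_integral ha.continuous s).deriv]
  exact ⟨fun s => (hasDerivAt_two_mul_integral ha.continuous s).differentiableAt,
    contDiff_const.mul ha⟩

theorem iteratedDeriv_succ_two_mul_integral (ha : Continuous a) (m : ℕ) (x : ℝ) :
    iteratedDeriv (m + 1) (fun s => 2 * ∫ τ in (0:ℝ)..s, a τ) x = 2 * iteratedDeriv m a x := by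
  rw [iteratedDeriv_succ', funext fun s => (hasDerivAt_two_mul_integral ha s).deriv,
    iteratedDeriv_const_mul_field]

theorem exists_two_mul_integral_eq_sq_mul (ha : ContDiff ℝ ∞ a)
    (haeven : ∀ k : ℕ, iteratedDeriv (2 * k) a 0 = 0) :
    ∃ h : ℝ → ℝ, ContDiff ℝ ∞ h ∧ (∀ s, 2 * ∫ τ in (0:ℝ)..s, a τ = s ^ 2 * h s) ∧
      h 0 = deriv a 0 ∧ ∀ m, Odd m → iteratedDeriv m h 0 = 0 := by
  have hg := iteratedDeriv_succ_two_mul_integral ha.continuous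
  obtain ⟨h, hh, hgh⟩ := exists_contDiff_eq_sq_mul_of_eq_zero (contDiff_two_mul_integral ha)
    (by simp) (by simpa [← iteratedDeriv_one, haeven 0] using hg 0 0)
  have hjet (n : ℕ) :
      2 * iteratedDeriv (n + 1) a 0 = (n + 2).choose 2 * 2 * iteratedDeriv n h 0 := by
    rw [← hg, funext hgh,
      iteratedDeriv_pow_mul_zero n 2 (hh.contDiffAt.of_le (WithTop.coe_le_coe.2 le_top))]
    norm_num [Nat.factorial]
  refine ⟨h, hh, hgh, by simpa using (hjet 0).symm, fun m ⟨k, hk⟩ => ?_⟩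
  have := hjet m
  rw [show m + 1 = 2 * (k + 1) by omega, haeven] at this
  simpa [(Nat.choose_pos (show 2 ≤ m + 2 by omega)).ne'] using this.symm

theorem pos_on_Icc_of_two_mul_integral_eq_sq_mul {L : ℝ} {h : ℝ → ℝ} (ha : Continuous a)
    (hapos : ∀ s ∈ Ioo 0 L, 0 < a s) (hgh : ∀ s, 2 * ∫ τ in (0:ℝ)..s, a τ = s ^ 2 * h s)
    (hh0 : 0 < h 0) : ∀ s ∈ Icc 0 L, 0 < h s := by
  rintro s ⟨hs0, hsL⟩
  rcases hs0.eq_or_lt with rfl | hs0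
  · exact hh0
  have hg_pos : 0 < s ^ 2 * h s := by
    rw [← hgh]
    exact mul_pos two_pos (intervalIntegral.intervalIntegral_pos_of_pos_on
      (ha.intervalIntegrable _ _) (fun t ht => hapos t ⟨ht.1, ht.2.trans_le hsL⟩) hs0)
  exact pos_of_mul_pos_right hg_pos (sq_nonneg s)

end TwoMulIntegral

theorem stmt_14_general (L : ℝ) (hL : 0 < L) (a : ℝ → ℝ)
    (ha : ContDiff ℝ (⊤ : ℕ∞) a)
    (hapos : ∀ s ∈ Set.Ioo 0 L, 0 < a s)
    (ha0' : deriv a 0 = 1)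
    (haeven : ∀ k : ℕ, iteratedDeriv (2 * k) a 0 = 0 ∧ iteratedDeriv (2 * k) a L = 0) :
    ∃ (b : ℝ → ℝ) (c d : ℝ), c < 0 ∧ L < d ∧
      ContDiffOn ℝ (⊤ : ℕ∞) b (Set.Ioo c d) ∧
      (∀ s ∈ Set.Icc 0 L, b s = Real.sqrt (2 * ∫ τ in (0:ℝ)..s, a τ)) ∧
      b 0 = 0 ∧ deriv b 0 = 1 ∧
      (∀ k : ℕ, iteratedDeriv (2 * k) b 0 = 0) ∧
      (∀ k : ℕ, iteratedDeriv (2 * k + 1) b L = 0) ∧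
      0 < b L := by
  have ha : ContDiff ℝ ∞ a := ha
  obtain ⟨h, hh, hgh, hh0, hh_odd⟩ := exists_two_mul_integral_eq_sq_mul ha fun k => (haeven k).1
  have hh_pos := pos_on_Icc_of_two_mul_integral_eq_sq_mul ha.continuous hapos hgh
    (by simp [hh0, ha0'])
  obtain ⟨c, d, hc, hd, hcd⟩ :=
    exists_Ioo_subset_of_Icc_subset (isOpen_lt continuous_const hh.continuous) hL.le hh_pos
  have h0_mem : (0 : ℝ) ∈ Ioo c d := ⟨hc, hL.trans hd⟩
  have hL_mem : L ∈ Ioo c d := ⟨hc.trans hL, hd⟩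
  have hq : ∀ s ∈ Ioo c d, ContDiffAt ℝ ∞ (fun s => √(h s)) s := fun s hs =>
    hh.contDiffAt.sqrt (hcd hs).ne'
  have hb : ∀ s ∈ Ioo c d, ContDiffAt ℝ ∞ (fun s => s * √(h s)) s := fun s hs =>
    contDiffAt_id.mul (hq s hs)
  have hb_sq : ∀ s ∈ Ioo c d, s * √(h s) * (s * √(h s)) = 2 * ∫ τ in (0:ℝ)..s, a τ :=
    fun s hs => by rw [hgh, mul_mul_mul_comm, Real.mul_self_sqrt (hcd hs).le, sq]
  have hbL : 0 < L * √(h L) := mul_pos hL (Real.sqrt_pos.2 (hcd hL_mem))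
  refine ⟨fun s => s * √(h s), c, d, hc, hd, fun s hs => (hb s hs).contDiffWithinAt,
    fun s hs => ?_, by simp, ?_, ?_, fun k => ?_, hbL⟩
  · rw [hgh, Real.sqrt_mul (sq_nonneg s), Real.sqrt_sq hs.1]
  · simpa [hh0, ha0'] using
      iteratedDeriv_pow_mul_zero 0 1 ((hq 0 h0_mem).of_le (WithTop.coe_le_coe.2 le_top))
  · exact iteratedDeriv_even_self_mul_eq_zero (hq 0 h0_mem)
      fun m hm => iteratedDeriv_odd_sqrt_eq_zero hh.contDiffAt (hcd h0_mem) hh_odd hm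
  · refine iteratedDeriv_odd_eq_zero_of_mul_self (hb L hL_mem) hbL.ne' (fun m ⟨j, hj⟩ => ?_)
      (odd_two_mul_add_one k)
    rw [Filter.EventuallyEq.iteratedDeriv_eq _
        (eventually_of_mem (Ioo_mem_nhds hL_mem.1 hd) hb_sq),
      hj, iteratedDeriv_succ_two_mul_integral ha.continuous, (haeven j).2, mul_zero]

/-- The Remark following Proposition 2.29: if `a` satisfies the smoothness conditions
(2.9), then `b(s) = √(2 ∫₀ˢ a(τ) dτ)` extends to a smooth function on an open interval
containing `[0, L]` and satisfies the smoothness conditions (2.10). -/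
theorem stmt_14 (L : ℝ) (hL : 0 < L) (a : ℝ → ℝ)
    (ha : ContDiff ℝ (⊤ : ℕ∞) a)
    (hapos : ∀ s ∈ Set.Ioo 0 L, 0 < a s)
    (ha0 : a 0 = 0) (haL : a L = 0)
    (ha0' : deriv a 0 = 1) (haL' : deriv a L = -1)
    (haeven : ∀ k : ℕ, iteratedDeriv (2 * k) a 0 = 0 ∧ iteratedDeriv (2 * k) a L = 0) :
    ∃ (b : ℝ → ℝ) (c d : ℝ), c < 0 ∧ L < d ∧
      ContDiffOn ℝ (⊤ : ℕ∞) b (Set.Ioo c d) ∧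
      (∀ s ∈ Set.Icc 0 L, b s = Real.sqrt (2 * ∫ τ in (0:ℝ)..s, a τ)) ∧
      b 0 = 0 ∧ deriv b 0 = 1 ∧
      (∀ k : ℕ, iteratedDeriv (2 * k) b 0 = 0) ∧
      (∀ k : ℕ, iteratedDeriv (2 * k + 1) b L = 0) ∧
      0 < b L :=
  stmt_14_general L hL a ha hapos ha0' haeven
end
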